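/- For every integer i with 0 ≤ i ≤ L, c_i(I) = (−1)^{i+t}. -/

import Mathlib

open Finset

/-- Sequences of length `ℓ` (positions `1..ℓ`) with entries in `{1,…,n}`,
encoded as functions `ℕ → ℕ` vanishing outside `[1, ℓ]`. -/
def Seqs (ℓ n : ℕ) : Set (ℕ → ℕ) :=
  {v | (∀ i ∈ Finset.Icc 1 ℓ, v i ∈ Finset.Icc 1 n) ∧ ∀ i, i ∉ Finset.Icc 1 ℓ → v i = 0}

/-- Descent set of a sequence of length `ℓ`:
`Des(v) = {i ∈ {1,…,ℓ-1} : v_i > v_{i+1}}`. -/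
def Des (ℓ : ℕ) (v : ℕ → ℕ) : Set ℕ :=
  {i | 1 ≤ i ∧ i < ℓ ∧ v (i + 1) < v i}

/-- Number of occurrences of the value `j` among positions `1..ℓ` of `v`. -/
def mult (ℓ : ℕ) (v : ℕ → ℕ) (j : ℕ) : ℕ :=
  ((Finset.Icc 1 ℓ).filter fun i => v i = j).card

/-- `𝔡^m(I, n)`: the number of sequences of length `n*m`, in which each of `1,…,n`
appears exactly `m` times, whose descent set is `I`. -/
noncomputable def dP (m : ℕ) (I : Finset ℕ) (n : ℕ) : ℕ :=
  Set.ncard {w ∈ Seqs (n * m) n |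
    Des (n * m) w = ↑I ∧ ∀ j ∈ Finset.Icc 1 n, mult (n * m) w j = m}

/-- `N(I, n)`: the number of sequences `v = (v_1, …, v_{α_t})` with entries in `{1,…,n}`
such that `Des v = I \ {α_t}` and `v_{α_t} ≠ 1`. -/
noncomputable def Ncount (I : Finset ℕ) (n : ℕ) : ℕ :=
  Set.ncard {v ∈ Seqs (I.sup id) n |
    Des (I.sup id) v = ↑(I.erase (I.sup id)) ∧ v (I.sup id) ≠ 1}

/-- `D^m(I, n)`: the number of sequences `v = (v_1, …, v_{α_t})` with entries in `{1,…,n}`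
such that `Des v = I \ {α_t}` and each of `1,…,n` appears at most `m` times in `v`. -/
noncomputable def Dcount (m : ℕ) (I : Finset ℕ) (n : ℕ) : ℕ :=
  Set.ncard {v ∈ Seqs (I.sup id) n |
    Des (I.sup id) v = ↑(I.erase (I.sup id)) ∧ ∀ j ∈ Finset.Icc 1 n, mult (I.sup id) v j ≤ m}

/-- `b_i(I)`: the number of sequences `v = (v_1, …, v_{α_t})` with entries in `{1,…,i+1}`
such that `Des v = I \ {α_t}`, every number in `{2,…,i+1}` occurs in `v`, and `v_{α_t} ≠ 1`. -/
noncomputable def bcoef (I : Finset ℕ) (i : ℕ) : ℕ :=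
  Set.ncard {v ∈ Seqs (I.sup id) (i + 1) |
    Des (I.sup id) v = ↑(I.erase (I.sup id)) ∧
    (∀ l ∈ Finset.Icc 2 (i + 1), ∃ j ∈ Finset.Icc 1 (I.sup id), v j = l) ∧
    v (I.sup id) ≠ 1}

/-- `L(I)`: the length of the longest run of consecutive integers contained in `I`. -/
def longestRun (I : Finset ℕ) : ℕ :=
  I.sup fun a => ((Finset.Icc a (I.sup id)).filter fun b => Finset.Icc a b ⊆ I).card

/-- `alphaVal I k` is the `k`-th smallest element of `I` (`1`-indexed), with `alphaVal I 0 = 0`. -/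
def alphaVal (I : Finset ℕ) (k : ℕ) : ℕ :=
  if k = 0 then 0 else (I.sort (· ≤ ·)).getD (k - 1) 0

/-- For a composition `A = (a_1,…,a_s)` of `t = |I|`, `sigmaC I A i` is
`σ_{i+1} = β_{a_1+⋯+a_i+1} + ⋯ + β_{a_1+⋯+a_{i+1}}`, where `β` is the sequence of first
differences of `(0, α_1, …, α_t)`; by telescoping this equals
`α_{a_1+⋯+a_{i+1}} - α_{a_1+⋯+a_i}`. -/
def sigmaC (I : Finset ℕ) {t : ℕ} (A : Composition t) (i : ℕ) : ℕ :=
  alphaVal I (A.sizeUpTo (i + 1)) - alphaVal I (A.sizeUpTo i)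

/-- `C(A, I)` for a composition `A = (a_1,…,a_r)`: the number of sequences
`v = (v_1, …, v_{α_t})` with entries in `{1,…,r}` such that `Des v = I \ {α_t}`
and the number `j` appears exactly `a_j` times in `v`, for each `j ∈ {1,…,r}`. -/
noncomputable def Ccount (I : Finset ℕ) {N : ℕ} (A : Composition N) : ℕ :=
  Set.ncard {v ∈ Seqs (I.sup id) A.length |
    Des (I.sup id) v = ↑(I.erase (I.sup id)) ∧
    ∀ j ∈ Finset.Icc 1 A.length, mult (I.sup id) v j = A.blocks.getD (j - 1) 0}

/-- The generalized binomial coefficient `C(a, i) = a(a-1)⋯(a-i+1)/i!` for an integer `a`. -/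
def genChoose (a : ℤ) (i : ℕ) : ℚ :=
  (∏ j ∈ Finset.range i, ((a : ℚ) - (j : ℚ))) / (Nat.factorial i)

/-!
Write `b_k` for `bcoef I k` and `ℓ = α_t`. Sorting the sequences counted by `N(I, n + 1)` by the
set `S ⊆ {2, …, n + 1}` of their values other than `1`, and relabelling `{1} ∪ S` increasingly
onto `{1, …, |S| + 1}`, gives `N(I, n + 1) = ∑ₖ C(n, k) b_k`. As
`C(n, k) = ∑_{i ≤ k} (-1)^(k+i) C(n + 1, i)`, this means
`c_i = (-1)^i ∑_{k ≥ i} (-1)^k b_k`.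

A run `a, …, a + k` in `I` forces `k + 1` strict descents from position `a` on (or `k` of them,
down to a last value `≥ 2`), which values in `{1, …, k + 1}` cannot accommodate. Hence `b_k = 0`
for `k < L`, and `c_i = (-1)^i ∑ₖ (-1)^k b_k` for `i ≤ L`.

It remains to show `∑ₖ (-1)^k b_k(I) = (-1)^t`, by induction on `t`. Let `u_j` count the
sequences with descent set `I \ {ℓ}` and set of values `{1, …, j}`, and `w_j` those among them
ending in `1`. Counting the sequences with descent set `I \ {ℓ}` whose set of values lies between
`{2, …, k + 1}` and `{1, …, k + 1}` by whether they take the value `1`, and by whether their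
last value is `1`, gives `u_{k+1} + u_k = b_k + w_{k+1}`. A sequence behind `w_{k+1}` is
constantly `1` after the last descent `p = max (I \ {ℓ})`, and cutting it at `p` is a bijection
onto the sequences behind `b_k(I \ {ℓ})`. So the `u`-terms telescope, and
`∑ₖ (-1)^k b_k(I) = -∑ₖ (-1)^k b_k(I \ {ℓ})`.
-/

section Binomial

variable {R : Type*} [CommRing R]

lemma choose_eq_sum_neg_one_pow_mul_choose_succ (n k : ℕ) :
    (n.choose k : R) = ∑ i ∈ range (k + 1), (-1) ^ (k + i) * ((n + 1).choose i : R) := by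
  have h := congrArg (Int.cast : ℤ → R)
    (Int.alternating_sum_range_choose_eq_choose (n := n) (m := k))
  push_cast at h
  simp_rw [pow_add, mul_assoc, ← mul_sum, h, ← mul_assoc, ← mul_pow]
  simp

lemma sum_mul_choose_eq_sum_mul_choose_succ (b : ℕ → R) (m n : ℕ) :
    ∑ k ∈ range m, b k * n.choose k =
      ∑ i ∈ range m, ((-1) ^ i * ∑ k ∈ Ico i m, (-1) ^ k * b k) * (n + 1).choose i := by
  simp_rw [choose_eq_sum_neg_one_pow_mul_choose_succ (R := R) n, mul_sum, range_eq_Ico]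
  rw [← sum_Ico_Ico_comm]
  simp_rw [sum_mul]
  refine sum_congr rfl fun i _ => sum_congr rfl fun k _ => ?_
  ring

lemma eq_of_forall_sum_mul_choose_succ_eq {a b : ℕ → R} {m : ℕ}
    (h : ∀ n : ℕ,
      ∑ i ∈ range m, a i * (n + 1).choose i = ∑ i ∈ range m, b i * (n + 1).choose i) :
    ∀ i < m, a i = b i := by
  induction m generalizing a b with
  | zero => simp
  | succ m ih =>
    have pascal : ∀ (f : ℕ → R) (n : ℕ), ∑ i ∈ range (m + 1), f i * (n + 2).choose i =
        ∑ i ∈ range m, f (i + 1) * (n + 1).choose i +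
          ∑ i ∈ range (m + 1), f i * (n + 1).choose i := by
      intro f n
      simp only [sum_range_succ' _ m, Nat.choose_succ_succ', Nat.cast_add, mul_add, sum_add_distrib,
        Nat.choose_zero_right]
      ring
    have hshift : ∀ i < m, a (i + 1) = b (i + 1) := ih fun n => by
      have := h (n + 1)
      rw [pascal, pascal, h n] at this
      exact add_right_cancel this
    rintro (_ | i) hi
    · have h0 := h 0
      simp only [sum_range_succ' _ m, zero_add, Nat.choose_zero_right, Nat.cast_one, mul_one] at h0
      rwa [sum_congr rfl fun i hi => by rw [hshift i (mem_range.1 hi)], add_left_cancel_iff] at h0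
    · exact hshift i (by omega)

end Binomial

/-- Sequences of length `ℓ` with descent set `D` that take every value in `H` and only values
in `X` on `{1,…,ℓ}`, and vanish elsewhere. -/
def descentSeqs (ℓ : ℕ) (D H X : Set ℕ) : Set (ℕ → ℕ) :=
  {v | Des ℓ v = D ∧ H ⊆ v '' Set.Icc 1 ℓ ∧ v '' Set.Icc 1 ℓ ⊆ X ∧
    ∀ i ∉ Set.Icc 1 ℓ, v i = 0}

section DescentSeqs

variable {ℓ : ℕ} {D H X : Set ℕ} {v : ℕ → ℕ}

lemma mem_Seqs_iff {n : ℕ} :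
    v ∈ Seqs ℓ n ↔
      v '' Set.Icc 1 ℓ ⊆ Set.Icc 1 n ∧ ∀ i ∉ Set.Icc 1 ℓ, v i = 0 := by
  simp only [Seqs, Set.mem_ofPred_eq, Set.subset_def, Set.forall_mem_image, Finset.mem_Icc,
    Set.mem_Icc]

lemma forall_exists_eq_iff_subset_image {a b : ℕ} :
    (∀ l ∈ Finset.Icc a b, ∃ i ∈ Finset.Icc 1 ℓ, v i = l) ↔
      Set.Icc a b ⊆ v '' Set.Icc 1 ℓ := by
  simp [Set.subset_def]

lemma apply_mem_insert_zero (hv : v ∈ descentSeqs ℓ D H X) (i : ℕ) : v i ∈ insert 0 X := by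
  by_cases hi : i ∈ Set.Icc 1 ℓ
  · exact Or.inr (hv.2.2.1 ⟨i, hi, rfl⟩)
  · exact Or.inl (hv.2.2.2 i hi)

lemma descentSeqs_finite (hX : X.Finite) : (descentSeqs ℓ D H X).Finite := by
  refine Set.Finite.of_finite_image (f := fun v (i : Fin (ℓ + 1)) => v i) ?_ ?_
  · refine (Set.Finite.pi (t := fun _ => insert 0 X) fun _ => hX.insert 0).subset ?_
    rintro _ ⟨v, hv, rfl⟩ i -
    exact apply_mem_insert_zero hv i
  · intro v hv w hw hvw
    funext i
    by_cases hiℓ : i ≤ ℓ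
    · exact congrFun hvw ⟨i, Nat.lt_succ_of_le hiℓ⟩
    · have hi : i ∉ Set.Icc 1 ℓ := fun h => hiℓ h.2
      rw [hv.2.2.2 i hi, hw.2.2.2 i hi]

lemma ncard_le_of_mem_descentSeqs (hv : v ∈ descentSeqs ℓ D H X) : H.ncard ≤ ℓ :=
  calc H.ncard ≤ (v '' Set.Icc 1 ℓ).ncard :=
        Set.ncard_le_ncard hv.2.1 ((Set.finite_Icc 1 ℓ).image v)
    _ ≤ (Set.Icc 1 ℓ).ncard := Set.ncard_image_le (Set.finite_Icc 1 ℓ)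
    _ = ℓ := by simp

lemma Des_comp_of_strictMonoOn {f : ℕ → ℕ} (hf : StrictMonoOn f X)
    (hv : v '' Set.Icc 1 ℓ ⊆ X) :
    Des ℓ (f ∘ v) = Des ℓ v := by
  ext i
  simp only [Des, Set.mem_ofPred_eq, Function.comp]
  refine and_congr_right fun hi => and_congr_right fun hiℓ => hf.lt_iff_lt ?_ ?_
  · exact hv ⟨i + 1, ⟨by omega, by omega⟩, rfl⟩
  · exact hv ⟨i, ⟨hi, hiℓ.le⟩, rfl⟩

lemma ncard_sep_descentSeqs_image {f : ℕ → ℕ} (hf0 : f 0 = 0) (hf : StrictMonoOn f X)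
    (hHX : H ⊆ X) (P : ℕ → Prop) :
    {w ∈ descentSeqs ℓ D (f '' H) (f '' X) | P (w ℓ)}.ncard =
      {v ∈ descentSeqs ℓ D H X | P (f (v ℓ))}.ncard := by
  classical
  have hinj : Set.InjOn (fun v => f ∘ v) {v ∈ descentSeqs ℓ D H X | P (f (v ℓ))} := by
    intro v hv w hw hvw
    funext i
    by_cases hi : i ∈ Set.Icc 1 ℓ
    · exact hf.injOn (hv.1.2.2.1 ⟨i, hi, rfl⟩) (hw.1.2.2.1 ⟨i, hi, rfl⟩) (congrFun hvw i)
    · rw [hv.1.2.2.2 i hi, hw.1.2.2.2 i hi]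
  rw [← hinj.ncard_image]
  congr 1
  ext w
  constructor
  · rintro ⟨⟨hD, hH, hX, h0⟩, hP⟩
    have hw : ∀ i ∈ Set.Icc 1 ℓ, ∃ x ∈ X, f x = w i := fun i hi => hX ⟨i, hi, rfl⟩
    set v : ℕ → ℕ := fun i => if i ∈ Set.Icc 1 ℓ then Function.invFunOn f X (w i) else 0
    have hvX : v '' Set.Icc 1 ℓ ⊆ X := by
      rintro _ ⟨i, hi, rfl⟩
      simpa only [v, if_pos hi] using Function.invFunOn_mem (hw i hi)
    have hfv : f ∘ v = w := by
      funext i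
      by_cases hi : i ∈ Set.Icc 1 ℓ
      · simpa only [v, Function.comp_apply, if_pos hi] using Function.invFunOn_eq (hw i hi)
      · simp only [v, Function.comp_apply, if_neg hi, hf0, h0 i hi]
    refine ⟨v, ⟨⟨?_, ?_, hvX, fun i hi => if_neg hi⟩, by rwa [← hfv] at hP⟩, hfv⟩
    · rw [← Des_comp_of_strictMonoOn hf hvX, hfv, hD]
    · intro x hx
      obtain ⟨i, hi, hwi⟩ := hH ⟨x, hx, rfl⟩
      refine ⟨i, hi, hf.injOn (hvX ⟨i, hi, rfl⟩) (hHX hx) ?_⟩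
      rw [← hwi, ← hfv, Function.comp_apply]
  · rintro ⟨v, ⟨⟨hD, hH, hX, h0⟩, hP⟩, rfl⟩
    refine ⟨⟨by rw [Des_comp_of_strictMonoOn hf hX, hD], ?_, ?_,
      fun i hi => by simp [h0 i hi, hf0]⟩, hP⟩
    · rw [Set.image_comp]
      exact Set.image_mono hH
    · rw [Set.image_comp]
      exact Set.image_mono hX

lemma bcoef_eq_ncard (I : Finset ℕ) (k : ℕ) :
    bcoef I k = {v ∈ descentSeqs (I.sup id) ↑(I.erase (I.sup id)) (Set.Icc 2 (k + 1))
      (Set.Icc 1 (k + 1)) | v (I.sup id) ≠ 1}.ncard := by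
  unfold bcoef
  congr 1
  ext v
  simp only [mem_Seqs_iff, forall_exists_eq_iff_subset_image, descentSeqs, Set.mem_ofPred_eq]
  tauto

lemma Ncount_eq_ncard (I : Finset ℕ) (n : ℕ) :
    Ncount I n = {v ∈ descentSeqs (I.sup id) ↑(I.erase (I.sup id)) ∅ (Set.Icc 1 n) |
      v (I.sup id) ≠ 1}.ncard := by
  unfold Ncount
  congr 1
  ext v
  simp only [mem_Seqs_iff, descentSeqs, Set.mem_ofPred_eq, Set.empty_subset]
  tauto

lemma descentSeqs_eq_empty_of_lt_ncard (h : ℓ < H.ncard) : descentSeqs ℓ D H X = ∅ :=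
  Set.eq_empty_of_forall_notMem fun _ hv => (ncard_le_of_mem_descentSeqs hv).not_gt h

lemma descentSeqs_empty_right (hℓ : 1 ≤ ℓ) : descentSeqs ℓ D H ∅ = ∅ :=
  Set.eq_empty_of_forall_notMem fun _ hv => hv.2.2.1 ⟨1, ⟨le_rfl, hℓ⟩, rfl⟩

lemma ncard_descentSeqs_Icc_two (k : ℕ) :
    (descentSeqs ℓ D (Set.Icc 2 (k + 1)) (Set.Icc 2 (k + 1))).ncard =
      (descentSeqs ℓ D (Set.Icc 1 k) (Set.Icc 1 k)).ncard := by
  have himage : (· - 1) '' Set.Icc 2 (k + 1) = Set.Icc 1 k := by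
    ext y
    constructor
    · rintro ⟨x, ⟨h2, hk⟩, rfl⟩
      exact ⟨Nat.le_sub_one_of_lt h2, Nat.sub_le_of_le_add hk⟩
    · rintro ⟨h1, hk⟩
      exact ⟨y + 1, ⟨by omega, by omega⟩, Nat.add_sub_cancel y 1⟩
  have hmono : StrictMonoOn (· - 1) (Set.Icc 2 (k + 1)) := fun x hx y _ hxy => by
    have := hx.1
    show x - 1 < y - 1
    omega
  simpa [himage] using
    (ncard_sep_descentSeqs_image (ℓ := ℓ) (D := D) (Nat.zero_sub 1) hmono subset_rfl
      (fun _ => True)).symm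

lemma ncard_descentSeqs_Icc_two_Icc_one (k : ℕ) :
    (descentSeqs ℓ D (Set.Icc 2 (k + 1)) (Set.Icc 1 (k + 1))).ncard =
      (descentSeqs ℓ D (Set.Icc 1 (k + 1)) (Set.Icc 1 (k + 1))).ncard +
        (descentSeqs ℓ D (Set.Icc 1 k) (Set.Icc 1 k)).ncard := by
  have hIcc : Set.Icc 1 (k + 1) = insert 1 (Set.Icc 2 (k + 1)) :=
    (Set.insert_Icc_add_one_left_eq_Icc (by omega)).symm
  have h1 : 1 ∉ Set.Icc 2 (k + 1) := fun h => by simp at h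
  set hits1 : Set (ℕ → ℕ) := {v | 1 ∈ v '' Set.Icc 1 ℓ}
  rw [← Set.ncard_inter_add_ncard_sdiff_eq_ncard _ hits1
    (descentSeqs_finite (Set.finite_Icc _ _)), ← ncard_descentSeqs_Icc_two k]
  congr 2
  · ext v
    simp only [Set.mem_inter_iff, descentSeqs, hits1, Set.mem_ofPred_eq, hIcc,
      Set.insert_subset_iff]
    tauto
  · ext v
    simp only [Set.mem_sdiff, descentSeqs, hits1, Set.mem_ofPred_eq]
    constructor
    · rintro ⟨⟨hD, hH, hX, h0⟩, hv1⟩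
      exact ⟨hD, hH, (Set.subset_insert_iff_of_notMem hv1).1 (hIcc ▸ hX), h0⟩
    · rintro ⟨hD, hH, hX, h0⟩
      exact ⟨⟨hD, hH, hX.trans (Set.Icc_subset_Icc_left (by norm_num)), h0⟩,
        fun h => h1 (hX h)⟩

lemma ncard_last_ne_one_add_ncard_last_eq_one (hℓ : 1 ≤ ℓ) (k : ℕ) :
    {v ∈ descentSeqs ℓ D (Set.Icc 2 (k + 1)) (Set.Icc 1 (k + 1)) | v ℓ ≠ 1}.ncard +
      {v ∈ descentSeqs ℓ D (Set.Icc 1 (k + 1)) (Set.Icc 1 (k + 1)) | v ℓ = 1}.ncard =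
      (descentSeqs ℓ D (Set.Icc 1 (k + 1)) (Set.Icc 1 (k + 1))).ncard +
        (descentSeqs ℓ D (Set.Icc 1 k) (Set.Icc 1 k)).ncard := by
  rw [← ncard_descentSeqs_Icc_two_Icc_one, ← Set.ncard_inter_add_ncard_sdiff_eq_ncard _
    {v | v ℓ ≠ 1} (descentSeqs_finite (Set.finite_Icc _ _))]
  congr 2
  ext v
  simp only [Set.mem_sdiff, Set.mem_ofPred_eq, not_not, descentSeqs]
  have hIcc : Set.Icc 1 (k + 1) = insert 1 (Set.Icc 2 (k + 1)) :=
    (Set.insert_Icc_add_one_left_eq_Icc (by omega)).symm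
  constructor
  · rintro ⟨⟨hD, hH, hX, h0⟩, hℓ1⟩
    exact ⟨⟨hD, (Set.Icc_subset_Icc_left (by norm_num : 1 ≤ 2)).trans hH, hX, h0⟩, hℓ1⟩
  · rintro ⟨⟨hD, hH, hX, h0⟩, hℓ1⟩
    refine ⟨⟨hD, ?_, hX, h0⟩, hℓ1⟩
    rw [hIcc]
    exact Set.insert_subset ⟨ℓ, ⟨hℓ, le_rfl⟩, hℓ1⟩ hH

end DescentSeqs

lemma eq_one_of_forall_notMem_Des {ℓ a : ℕ} {v : ℕ → ℕ}
    (hdes : ∀ i ∈ Set.Ico a ℓ, i ∉ Des ℓ v) (ha : 1 ≤ a)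
    (hpos : ∀ i ∈ Set.Icc a ℓ, 1 ≤ v i) (hℓ : v ℓ = 1) :
    ∀ i ∈ Set.Icc a ℓ, v i = 1 := by
  have hmono : MonotoneOn v (Set.Icc a ℓ) := monotoneOn_of_le_add_one Set.ordConnected_Icc
    fun i _ hi hi1 => by
      have := hdes i ⟨hi.1, hi1.2⟩
      simp only [Des, Set.mem_ofPred_eq, not_and, not_lt] at this
      exact this (ha.trans hi.1) hi1.2
  intro i hi
  have := hmono hi ⟨hi.1.trans hi.2, le_rfl⟩ hi.2
  have := hpos i hi
  omega

lemma add_le_add_of_Ico_subset_Des {ℓ a c : ℕ} {v : ℕ → ℕ} (hac : a ≤ c)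
    (h : Set.Ico a c ⊆ Des ℓ v) : v c + c ≤ v a + a := by
  have hanti : AntitoneOn (fun i => v i + i) (Set.Icc a c) :=
    antitoneOn_of_add_one_le Set.ordConnected_Icc fun i _ hi hi1 => by
      have := (h ⟨hi.1, hi1.2⟩).2.2
      show v (i + 1) + (i + 1) ≤ v i + i
      omega
  exact hanti ⟨le_rfl, hac⟩ ⟨hac, le_rfl⟩ hac

section Truncation

variable {ℓ p k : ℕ} {D : Finset ℕ}

def truncate (p : ℕ) (v : ℕ → ℕ) : ℕ → ℕ := fun i => if i ≤ p then v i else 0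

def padOnes (p ℓ : ℕ) (w : ℕ → ℕ) : ℕ → ℕ :=
  fun i => if i ≤ p then w i else if i ≤ ℓ then 1 else 0

lemma truncate_of_le {v : ℕ → ℕ} {i : ℕ} (hi : i ≤ p) : truncate p v i = v i := if_pos hi

lemma padOnes_of_le {w : ℕ → ℕ} {i : ℕ} (hi : i ≤ p) : padOnes p ℓ w i = w i :=
  if_pos hi

lemma padOnes_of_lt_of_le {w : ℕ → ℕ} {i : ℕ} (hpi : p < i) (hiℓ : i ≤ ℓ) :
    padOnes p ℓ w i = 1 := by
  simp [padOnes, hpi.not_ge, hiℓ]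

lemma apply_eq_one_after_last_descent {H : Set ℕ} (hDp : ∀ x ∈ D, x ≤ p) {v : ℕ → ℕ}
    (hv : v ∈ descentSeqs ℓ ↑D H (Set.Icc 1 (k + 1))) (hvℓ : v ℓ = 1) {i : ℕ}
    (hpi : p < i) (hiℓ : i ≤ ℓ) : v i = 1 := by
  refine eq_one_of_forall_notMem_Des (a := p + 1) (fun j hj hjD => ?_) (by omega) (fun j hj => ?_)
    hvℓ i ⟨hpi, hiℓ⟩
  · rw [hv.1] at hjD
    have := hDp j hjD
    have := hj.1
    omega
  · exact (hv.2.2.1 ⟨j, ⟨by have := hj.1; omega, hj.2⟩, rfl⟩).1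

lemma Des_truncate (hD : ∀ x ∈ D, x ≤ p) (hpℓ : p < ℓ) {v : ℕ → ℕ}
    (hdes : Des ℓ v = ↑D) :
    Des p (truncate p v) = ↑(D.erase p) := by
  ext i
  simp only [Des, Set.mem_ofPred_eq, coe_erase, Set.mem_sdiff, Set.mem_singleton_iff, ← hdes]
  constructor
  · rintro ⟨h1, hip, hlt⟩
    rw [truncate_of_le hip.le, truncate_of_le hip] at hlt
    exact ⟨⟨h1, by omega, hlt⟩, hip.ne⟩
  · rintro ⟨⟨h1, hiℓ, hlt⟩, hip⟩
    have hiD : i ∈ D := by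
      rw [← Finset.mem_coe, ← hdes]
      exact ⟨h1, hiℓ, hlt⟩
    have hip : i < p := lt_of_le_of_ne (hD i hiD) hip
    rw [truncate_of_le hip.le, truncate_of_le hip]
    exact ⟨h1, hip, hlt⟩

lemma Des_padOnes (hD : ∀ x ∈ D, 1 ≤ x ∧ x ≤ p) (hpℓ : p < ℓ) (hp : p = 0 ∨ p ∈ D)
    {w : ℕ → ℕ} (hdes : Des p w = ↑(D.erase p)) (hwp : p ∈ D → 1 < w p) :
    Des ℓ (padOnes p ℓ w) = ↑D := by
  ext i
  simp only [Des, Set.mem_ofPred_eq, Finset.mem_coe]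
  rcases lt_trichotomy i p with hip | rfl | hpi
  · have hiff : i ∈ Des p w ↔ i ∈ (D.erase p : Set ℕ) := by rw [hdes]
    simp only [Des, Set.mem_ofPred_eq, coe_erase, Set.mem_sdiff, Finset.mem_coe,
      Set.mem_singleton_iff] at hiff
    rw [padOnes_of_le hip.le, padOnes_of_le hip]
    constructor
    · rintro ⟨h1, -, hlt⟩
      exact (hiff.1 ⟨h1, hip, hlt⟩).1
    · intro hiD
      exact ⟨(hD i hiD).1, by omega, (hiff.2 ⟨hiD, hip.ne⟩).2.2⟩
  · rcases hp with rfl | hpD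
    · simp only [nonpos_iff_eq_zero, one_ne_zero, false_and, false_iff]
      exact fun h => by simpa using (hD 0 h).1
    · rw [padOnes_of_le le_rfl, padOnes_of_lt_of_le (by omega) (by omega)]
      simp only [hpD, iff_true]
      exact ⟨(hD i hpD).1, hpℓ, hwp hpD⟩
  · constructor
    · rintro ⟨-, hiℓ, hlt⟩
      rw [padOnes_of_lt_of_le hpi hiℓ.le, padOnes_of_lt_of_le (by omega) hiℓ] at hlt
      exact absurd hlt (lt_irrefl 1)
    · intro hiD
      exact absurd (hD i hiD).2 (not_le.2 hpi)

lemma truncate_mem (hD : ∀ x ∈ D, 1 ≤ x ∧ x ≤ p) (hpℓ : p < ℓ)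
    (hp : p = 0 ∨ p ∈ D) {v : ℕ → ℕ}
    (hv : v ∈ descentSeqs ℓ ↑D (Set.Icc 1 (k + 1)) (Set.Icc 1 (k + 1))) (hvℓ : v ℓ = 1) :
    truncate p v ∈ {w ∈ descentSeqs p ↑(D.erase p) (Set.Icc 2 (k + 1)) (Set.Icc 1 (k + 1)) |
      w p ≠ 1} := by
  have htail : ∀ i, p < i → i ≤ ℓ → v i = 1 := fun i =>
    apply_eq_one_after_last_descent (fun x hx => (hD x hx).2) hv hvℓ
  obtain ⟨hdes, hH, hX, h0⟩ := hv
  refine ⟨⟨Des_truncate (fun x hx => (hD x hx).2) hpℓ hdes, ?_, ?_, fun i hi => ?_⟩, ?_⟩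
  · rintro l ⟨hl2, hlk⟩
    obtain ⟨i, hi, rfl⟩ := hH ⟨by omega, hlk⟩
    have hip : i ≤ p := by
      by_contra! hpi
      have := htail i hpi hi.2
      omega
    exact ⟨i, ⟨hi.1, hip⟩, truncate_of_le hip⟩
  · rintro _ ⟨i, hi, rfl⟩
    rw [truncate_of_le hi.2]
    exact hX ⟨i, ⟨hi.1, hi.2.trans hpℓ.le⟩, rfl⟩
  · by_cases hip : i ≤ p
    · rw [truncate_of_le hip, h0 i (by simp only [Set.mem_Icc] at hi ⊢; omega)]
    · exact if_neg hip
  · rw [truncate_of_le le_rfl]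
    rcases hp with rfl | hpD
    · rw [h0 0 (by simp)]
      omega
    · have hdesc : v (p + 1) < v p := (hdes ▸ Finset.mem_coe.2 hpD : p ∈ Des ℓ v).2.2
      rw [htail (p + 1) (by omega) (by omega)] at hdesc
      omega

lemma padOnes_mem (hD : ∀ x ∈ D, 1 ≤ x ∧ x ≤ p) (hpℓ : p < ℓ) (hp : p = 0 ∨ p ∈ D)
    {w : ℕ → ℕ} (hw : w ∈ {w ∈ descentSeqs p ↑(D.erase p) (Set.Icc 2 (k + 1))
      (Set.Icc 1 (k + 1)) | w p ≠ 1}) :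
    padOnes p ℓ w ∈
      {v ∈ descentSeqs ℓ ↑D (Set.Icc 1 (k + 1)) (Set.Icc 1 (k + 1)) | v ℓ = 1} := by
  obtain ⟨⟨hdes, hH, hX, h0⟩, hwp⟩ := hw
  have hwp : p ∈ D → 1 < w p := fun hpD => by
    have := (hX ⟨p, ⟨(hD p hpD).1, le_rfl⟩, rfl⟩).1
    omega
  refine ⟨⟨Des_padOnes hD hpℓ hp hdes hwp, ?_, ?_, fun i hi => ?_⟩,
    padOnes_of_lt_of_le hpℓ le_rfl⟩
  · rintro l ⟨hl1, hlk⟩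
    rcases eq_or_lt_of_le hl1 with rfl | hl2
    · exact ⟨ℓ, ⟨by omega, le_rfl⟩, padOnes_of_lt_of_le hpℓ le_rfl⟩
    · obtain ⟨i, hi, rfl⟩ := hH ⟨hl2, hlk⟩
      exact ⟨i, ⟨hi.1, hi.2.trans hpℓ.le⟩, padOnes_of_le hi.2⟩
  · rintro _ ⟨i, hi, rfl⟩
    by_cases hip : i ≤ p
    · rw [padOnes_of_le hip]
      exact hX ⟨i, ⟨hi.1, hip⟩, rfl⟩
    · rw [padOnes_of_lt_of_le (by omega) hi.2]
      exact ⟨le_rfl, by omega⟩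
  · simp only [Set.mem_Icc, not_and_or, not_le] at hi
    rcases hi with hi0 | hiℓ
    · rw [padOnes_of_le (by omega)]
      exact h0 i (by simp only [Set.mem_Icc]; omega)
    · simp [padOnes, show ¬ i ≤ p by omega, show ¬ i ≤ ℓ by omega]

lemma ncard_last_eq_one_eq_bcoef (hℓ : 1 ≤ ℓ) (hD : ∀ x ∈ D, 1 ≤ x ∧ x < ℓ)
    (k : ℕ) :
    {v ∈ descentSeqs ℓ ↑D (Set.Icc 1 (k + 1)) (Set.Icc 1 (k + 1)) | v ℓ = 1}.ncard =
      bcoef D k := by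
  rw [bcoef_eq_ncard]
  set p := D.sup id
  have hDp : ∀ x ∈ D, 1 ≤ x ∧ x ≤ p := fun x hx =>
    ⟨(hD x hx).1, Finset.le_sup (f := id) hx⟩
  have hpℓ : p < ℓ :=
    (Finset.sup_lt_iff (by rw [Nat.bot_eq_zero]; omega)).2 fun x hx => (hD x hx).2
  have hp : p = 0 ∨ p ∈ D := by
    rcases D.eq_empty_or_nonempty with rfl | hne
    · exact Or.inl rfl
    · obtain ⟨a, ha, hpa⟩ := D.exists_mem_eq_sup hne id
      exact Or.inr (by rw [show p = a from hpa]; exact ha)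
  refine Set.BijOn.ncard_eq (Set.InvOn.bijOn (f' := padOnes p ℓ)
    ⟨fun v hv => ?_, fun w hw => ?_⟩ (fun v hv => truncate_mem hDp hpℓ hp hv.1 hv.2)
    (fun w hw => padOnes_mem hDp hpℓ hp hw))
  · funext i
    simp only [padOnes, truncate]
    split_ifs with hip hiℓ
    · rfl
    · exact (apply_eq_one_after_last_descent (fun x hx => (hDp x hx).2) hv.1 hv.2 (not_le.1 hip)
        hiℓ).symm
    · exact (hv.1.2.2.2 i (by simp only [Set.mem_Icc]; omega)).symm
  · funext i
    simp only [padOnes, truncate]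
    split_ifs with hip
    · rfl
    · exact (hw.1.2.2.2 i (by simp only [Set.mem_Icc]; omega)).symm

end Truncation

lemma bcoef_eq_zero_of_lt {I : Finset ℕ} {k : ℕ} (h : I.sup id < k) : bcoef I k = 0 := by
  rw [bcoef_eq_ncard, descentSeqs_eq_empty_of_lt_ncard (by simpa using h)]
  simp

lemma bcoef_empty_zero : bcoef ∅ 0 = 1 := by
  rw [bcoef_eq_ncard, Set.ncard_eq_one]
  refine ⟨0, Set.eq_singleton_iff_unique_mem.2
    ⟨⟨⟨?_, by simp, by simp, fun _ _ => rfl⟩, by simp⟩,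
      fun v hv => funext fun i => ?_⟩⟩
  · ext i
    simp [Des]
  · exact hv.1.2.2.2 i (by simp)

lemma sum_neg_one_pow_mul_bcoef (I : Finset ℕ) (hI : ∀ x ∈ I, 1 ≤ x) :
    ∑ k ∈ range (I.sup id + 1), (-1 : ℤ) ^ k * bcoef I k = (-1) ^ #I := by
  induction I using Finset.eraseInduction with | H I ih
  rcases I.eq_empty_or_nonempty with rfl | hne
  · simp [bcoef_empty_zero]
  set ℓ := I.sup id
  have hℓI : ℓ ∈ I := by
    obtain ⟨a, ha, hℓa⟩ := I.exists_mem_eq_sup hne id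
    rwa [show ℓ = a from hℓa]
  have hℓ : 1 ≤ ℓ := hI ℓ hℓI
  set D := I.erase ℓ
  have hD : ∀ x ∈ D, 1 ≤ x ∧ x < ℓ := fun x hx =>
    ⟨hI x (mem_of_mem_erase hx), lt_of_le_of_ne (le_sup (f := id) (mem_of_mem_erase hx))
      (ne_of_mem_erase hx)⟩
  set u : ℕ → ℤ := fun j => (descentSeqs ℓ ↑D (Set.Icc 1 j) (Set.Icc 1 j)).ncard
  have hrec : ∀ k, (bcoef I k : ℤ) = u k + u (k + 1) - bcoef D k := fun k => by
    have := ncard_last_ne_one_add_ncard_last_eq_one (D := ↑D) hℓ k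
    rw [ncard_last_eq_one_eq_bcoef hℓ hD, ← bcoef_eq_ncard] at this
    simp only [u]
    omega
  have hu0 : u 0 = 0 := by simp [u, descentSeqs_empty_right hℓ]
  have huℓ : u (ℓ + 1) = 0 := by simp [u, descentSeqs_eq_empty_of_lt_ncard]
  have hDℓ : D.sup id + 1 ≤ ℓ + 1 := by
    have := (Finset.sup_le_iff (f := id)).2 fun x hx => (hD x hx).2.le
    omega
  calc ∑ k ∈ range (ℓ + 1), (-1 : ℤ) ^ k * bcoef I k
      = ∑ k ∈ range (ℓ + 1), ((-1) ^ k * u k - (-1) ^ (k + 1) * u (k + 1)) -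
          ∑ k ∈ range (ℓ + 1), (-1) ^ k * (bcoef D k : ℤ) := by
        rw [← sum_sub_distrib]
        refine sum_congr rfl fun k _ => ?_
        rw [hrec k]
        ring
    _ = -∑ k ∈ range (D.sup id + 1), (-1) ^ k * (bcoef D k : ℤ) := by
        rw [sum_range_sub', hu0, huℓ, eventually_constant_sum (fun k hk => ?_) hDℓ]
        · ring
        · rw [bcoef_eq_zero_of_lt (by omega)]
          simp
    _ = (-1) ^ #I := by
        rw [ih ℓ hℓI fun x hx => (hD x hx).1, ← card_erase_add_one hℓI, pow_succ]
        ring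

lemma longestRun_le {I : Finset ℕ} (hI : ∀ x ∈ I, 1 ≤ x) : longestRun I ≤ I.sup id :=
  Finset.sup_le fun a ha =>
    (card_filter_le _ _).trans (by rw [Nat.card_Icc]; have := hI a ha; omega)

lemma exists_Icc_subset_of_lt_longestRun {I : Finset ℕ} {k : ℕ} (h : k < longestRun I) :
    ∃ a ∈ I, Finset.Icc a (a + k) ⊆ I := by
  obtain ⟨a, ha, hk⟩ := Finset.lt_sup_iff.1 h
  set F := (Finset.Icc a (I.sup id)).filter fun b => Finset.Icc a b ⊆ I
  have : ∃ b ∈ F, a + k ≤ b := by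
    by_contra! hlt
    have hF : F ⊆ Finset.Ico a (a + k) := fun b hb =>
      Finset.mem_Ico.2 ⟨(Finset.mem_Icc.1 (mem_filter.1 hb).1).1, hlt b hb⟩
    have := card_le_card hF
    simp only [Nat.card_Ico, add_tsub_cancel_left] at this
    exact (lt_irrefl _ (hk.trans_le this))
  obtain ⟨b, hb, hkb⟩ := this
  exact ⟨a, ha, (Finset.Icc_subset_Icc_right hkb).trans (mem_filter.1 hb).2⟩

lemma bcoef_eq_zero_of_Icc_subset {I : Finset ℕ} (hI : ∀ x ∈ I, 1 ≤ x) {a k : ℕ}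
    (ha : a ∈ I) (h : Finset.Icc a (a + k) ⊆ I) : bcoef I k = 0 := by
  rw [bcoef_eq_ncard]
  set ℓ := I.sup id
  have ha1 := hI a ha
  have hakℓ : a + k ≤ ℓ := le_sup (f := id) (h (Finset.mem_Icc.2 ⟨by omega, le_rfl⟩))
  refine (Set.ncard_eq_zero ((descentSeqs_finite (Set.finite_Icc _ _)).subset
    (Set.sep_subset _ _))).2 (Set.eq_empty_of_forall_notMem fun v ⟨hv, hvℓ⟩ => ?_)
  obtain ⟨c, hc⟩ : ∃ c, c = min (a + k + 1) ℓ := ⟨_, rfl⟩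
  have hrun : Set.Ico a c ⊆ Des ℓ v := fun i hi => by
    have := hi.2
    rw [hv.1, coe_erase]
    exact ⟨h (Finset.mem_Icc.2 ⟨hi.1, by omega⟩), Set.mem_singleton_iff.not.2 (by omega)⟩
  have hdrop := add_le_add_of_Ico_subset_Des (by omega) hrun
  have hva := (hv.2.2.1 ⟨a, ⟨ha1, by omega⟩, rfl⟩).2
  have hvc := (hv.2.2.1 ⟨c, ⟨by omega, by omega⟩, rfl⟩).1
  have hvc1 : c = ℓ → v c ≠ 1 := fun h => h ▸ hvℓ
  omega

lemma bcoef_eq_zero_of_lt_longestRun {I : Finset ℕ} (hI : ∀ x ∈ I, 1 ≤ x) {k : ℕ}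
    (h : k < longestRun I) : bcoef I k = 0 := by
  obtain ⟨a, ha, hrun⟩ := exists_Icc_subset_of_lt_longestRun h
  exact bcoef_eq_zero_of_Icc_subset hI ha hrun

lemma exists_strictMonoOn_image_Icc_eq (S : Finset ℕ) (hS : ∀ x ∈ S, 2 ≤ x) :
    ∃ e : ℕ → ℕ, e 0 = 0 ∧ e 1 = 1 ∧ StrictMonoOn e (Set.Iic (#S + 1)) ∧
      e '' Set.Icc 2 (#S + 1) = S := by
  classical
  set T := insert 0 (insert 1 S)
  -- `Nat.nth (· ∈ T)` lists `0`, `1` and then the elements of `S` in increasing order.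
  have h1 : 1 ∉ S := fun h => by have := hS 1 h; omega
  have h0 : 0 ∉ insert 1 S := by
    simp only [mem_insert, zero_ne_one, false_or]
    exact fun h => by have := hS 0 h; omega
  have hf : (Set.ofPred (· ∈ T)).Finite := T.finite_toSet
  have hcard : #hf.toFinset = #S + 2 := by
    rw [show hf.toFinset = T by ext; simp, card_insert_of_notMem h0, card_insert_of_notMem h1]
  have hmono := Nat.nth_strictMonoOn hf
  rw [hcard] at hmono
  have he0 : Nat.nth (· ∈ T) 0 = 0 := Nat.nth_zero_of_zero (by simp [T])
  have he1 : Nat.nth (· ∈ T) 1 = 1 := by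
    have := Nat.nth_count (p := (· ∈ T)) (n := 1) (by simp [T])
    rwa [Nat.count_one, if_pos (by simp [T])] at this
  refine ⟨Nat.nth (· ∈ T), he0, he1, fun x hx y hy =>
    hmono (Set.mem_Iio.2 (Nat.lt_succ_of_le hx)) (Set.mem_Iio.2 (Nat.lt_succ_of_le hy)), ?_⟩
  have hIcc : Set.Icc 2 (#S + 1) = Set.Iio (#S + 2) \ {0, 1} := by
    ext x
    simp only [Set.mem_Icc, Set.mem_sdiff, Set.mem_Iio, Set.mem_insert_iff, Set.mem_singleton_iff]
    omega
  have himage := Nat.image_nth_Iio_card hf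
  rw [hcard] at himage
  have h01 : {0, 1} ⊆ Set.Iio (#S + 2) := by
    simp only [Set.insert_subset_iff, Set.singleton_subset_iff, Set.mem_Iio]
    omega
  rw [hIcc, hmono.injOn.image_sdiff_subset h01, himage, Set.image_pair, he0, he1]
  ext x
  simp only [Set.mem_sdiff, Set.mem_insert_iff, Set.mem_singleton_iff, Finset.mem_coe]
  constructor
  · rintro ⟨hx, hx01⟩
    have : x = 0 ∨ x = 1 ∨ x ∈ S := by simpa [T] using hx
    tauto
  · intro hx
    have := hS x hx
    exact ⟨by simp [T, hx], by omega⟩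

lemma ncard_descentSeqs_insert_one {ℓ : ℕ} {D : Set ℕ} (S : Finset ℕ)
    (hS : ∀ x ∈ S, 2 ≤ x) :
    {v ∈ descentSeqs ℓ D ↑S (insert 1 ↑S) | v ℓ ≠ 1}.ncard =
      {w ∈ descentSeqs ℓ D (Set.Icc 2 (#S + 1)) (Set.Icc 1 (#S + 1)) | w ℓ ≠ 1}.ncard := by
  obtain ⟨e, he0, he1, hmono, himage⟩ := exists_strictMonoOn_image_Icc_eq S hS
  have hIcc : Set.Icc 1 (#S + 1) = insert 1 (Set.Icc 2 (#S + 1)) :=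
    (Set.insert_Icc_add_one_left_eq_Icc (by omega)).symm
  have := ncard_sep_descentSeqs_image (ℓ := ℓ) (D := D) he0 (hmono.mono fun x hx => hx.2)
    (Set.Icc_subset_Icc_left (by norm_num : 1 ≤ 2)) (· ≠ 1)
  rw [hIcc, Set.image_insert_eq, himage, he1, ← hIcc] at this
  rw [this]
  congr 1
  ext w
  refine and_congr_right fun hw => not_congr ⟨fun h => ?_, fun h => h ▸ he1⟩
  have hwℓ : w ℓ ∈ Set.Iic (#S + 1) := by
    rcases apply_mem_insert_zero hw ℓ with h0 | hX
    · simp [h0]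
    · exact hX.2
  exact hmono.injOn hwℓ (by simp) (h.trans he1.symm)

lemma ncard_eq_sum_ncard_fiber {α β : Type*} [DecidableEq β] {s : Set α} (hs : s.Finite)
    {t : Finset β} {f : α → β} (hf : ∀ x ∈ s, f x ∈ t) :
    s.ncard = ∑ b ∈ t, {x ∈ s | f x = b}.ncard := by
  rw [Set.ncard_eq_toFinset_card s hs,
    card_eq_sum_card_fiberwise fun x hx => hf x (by simpa using hx)]
  refine sum_congr rfl fun b _ => ?_
  rw [Set.ncard_eq_toFinset_card _ (hs.subset (Set.sep_subset _ _))]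
  congr 1
  ext
  simp

lemma Ncount_succ_eq_sum_choose_mul_bcoef (I : Finset ℕ) (n : ℕ) :
    Ncount I (n + 1) = ∑ k ∈ range (n + 1), n.choose k * bcoef I k := by
  classical
  rw [Ncount_eq_ncard]
  set ℓ := I.sup id
  set D : Set ℕ := ↑(I.erase ℓ)
  set values : (ℕ → ℕ) → Finset ℕ := fun v => ((Finset.Icc 1 ℓ).image v).erase 1
  have hvalues : ∀ v, (values v : Set ℕ) = v '' Set.Icc 1 ℓ \ {1} := fun v => by simp [values]
  have hfiber : ∀ S ∈ (Finset.Icc 2 (n + 1)).powerset,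
      {v ∈ {v ∈ descentSeqs ℓ D ∅ (Set.Icc 1 (n + 1)) | v ℓ ≠ 1} | values v = S}.ncard =
        bcoef I #S := by
    intro S hS
    have hSIcc : ∀ x ∈ S, 2 ≤ x ∧ x ≤ n + 1 := fun x hx =>
      Finset.mem_Icc.1 (Finset.mem_powerset.1 hS hx)
    have hS2 : ∀ x ∈ S, 2 ≤ x := fun x hx => (hSIcc x hx).1
    have h1 : (1 : ℕ) ∉ (S : Set ℕ) := fun h => by have := hS2 1 h; omega
    rw [bcoef_eq_ncard, ← ncard_descentSeqs_insert_one S hS2]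
    congr 1
    ext v
    simp only [descentSeqs, Set.mem_ofPred_eq, Set.empty_subset, true_and,
      ← Finset.coe_inj, hvalues]
    constructor
    · rintro ⟨⟨⟨hD, hX, h0⟩, hvℓ⟩, hS⟩
      refine ⟨⟨hD, hS ▸ Set.sdiff_subset, ?_, h0⟩, hvℓ⟩
      rw [← hS, Set.insert_sdiff_singleton]
      exact Set.subset_insert 1 _
    · rintro ⟨⟨hD, hH, hX, h0⟩, hvℓ⟩
      refine ⟨⟨⟨hD, hX.trans ?_, h0⟩, hvℓ⟩, ?_⟩
      · rintro x (rfl | hx)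
        · exact ⟨le_rfl, by omega⟩
        · exact ⟨by have := hS2 x hx; omega, (hSIcc x hx).2⟩
      · ext x
        constructor
        · rintro ⟨hx, hx1⟩
          exact (hX hx).resolve_left hx1
        · intro hx
          exact ⟨hH hx, fun h => h1 (h ▸ hx)⟩
  rw [ncard_eq_sum_ncard_fiber (t := (Finset.Icc 2 (n + 1)).powerset) (f := values)
    ((descentSeqs_finite (Set.finite_Icc _ _)).subset (Set.sep_subset _ _)), sum_congr rfl hfiber,
    sum_powerset_apply_card, Nat.card_Icc, show n + 1 + 1 - 2 = n by omega]
  · simp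
  · rintro v ⟨⟨-, -, hX, -⟩, -⟩
    rw [Finset.mem_powerset, ← Finset.coe_subset, hvalues, Finset.coe_Icc]
    rintro x ⟨hx, hx1⟩
    have := hX hx
    exact ⟨by have := this.1; have : x ≠ 1 := hx1; omega, this.2⟩

theorem stmt_15_general (I : Finset ℕ) (hIpos : ∀ x ∈ I, 1 ≤ x)
    (c : ℕ → ℚ)
    (hc : ∀ n : ℕ, 1 ≤ n →
      (Ncount I n : ℚ) = ∑ i ∈ Finset.range (I.sup id + 1), c i * (n.choose i : ℚ)) :
    ∀ i ≤ longestRun I, c i = (-1 : ℚ) ^ (i + I.card) := by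
  set ℓ := I.sup id
  have hcoef : ∀ i < ℓ + 1,
      c i = (-1) ^ i * ∑ k ∈ Ico i (ℓ + 1), (-1) ^ k * (bcoef I k : ℚ) := by
    refine eq_of_forall_sum_mul_choose_succ_eq fun n => ?_
    rw [← hc (n + 1) (by omega), ← sum_mul_choose_eq_sum_mul_choose_succ,
      Ncount_succ_eq_sum_choose_mul_bcoef]
    push_cast
    rw [← eventually_constant_sum (N := n + 1) (n := n + ℓ + 1)
      (fun k hk => by simp [Nat.choose_eq_zero_of_lt hk]) (by omega),
      eventually_constant_sum (N := ℓ + 1) (fun k hk => by simp [bcoef_eq_zero_of_lt (I := I) hk])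
      (by omega)]
    exact sum_congr rfl fun k _ => mul_comm _ _
  have hsum : ∑ k ∈ range (ℓ + 1), (-1 : ℚ) ^ k * bcoef I k = (-1) ^ #I := by
    exact_mod_cast sum_neg_one_pow_mul_bcoef I hIpos
  intro i hi
  have hlow : ∑ k ∈ range i, (-1 : ℚ) ^ k * bcoef I k = 0 :=
    sum_eq_zero fun k hk => by
      simp [bcoef_eq_zero_of_lt_longestRun hIpos ((mem_range.1 hk).trans_le hi)]
  have hiℓ : i ≤ ℓ := hi.trans (longestRun_le hIpos)
  rw [hcoef i (by omega), ← zero_add (∑ k ∈ Ico i _, _), ← hlow,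
    sum_range_add_sum_Ico _ (by omega : i ≤ ℓ + 1), hsum, pow_add]

/-- if `c_0,…,c_{α_t}` are the coefficients of `N(I,n)` in the basis
`(C(n,i))_i`, then `c_i = (-1)^{i+t}` for every `0 ≤ i ≤ L`. -/
theorem stmt_15 (I : Finset ℕ) (hI : I.Nonempty) (hIpos : ∀ x ∈ I, 1 ≤ x)
    (c : ℕ → ℚ)
    (hc : ∀ n : ℕ, 1 ≤ n →
      (Ncount I n : ℚ) = ∑ i ∈ Finset.range (I.sup id + 1), c i * (n.choose i : ℚ)) :
    ∀ i ≤ longestRun I, c i = (-1 : ℚ) ^ (i + I.card) :=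
  stmt_15_general I hIpos c hc
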